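/- Let q be an even integer with 0 < q < m. Then for every t ∈ V_m, ξ⁺_q(t)·(ξ⁺_1(t) − ξ⁺_1(q)) = ξ⁺_{q+1}(t) + q·ξ⁻_{q+1}(t) in R, where ξ⁺_1(q) ∈ R is the value of ξ⁺_1 at the vertex q. -/

import Mathlib

/-!
On either side of the middle of `V_m` each class is a binomial coefficient times a product of
consecutive linear forms `∓α + kδ`, with parameters that become explicit once the ceilings of
the definition are replaced by integer halves such as `n = ⌊(t - Q) / 2⌋`. For even `q` the
factor `ξ⁺_1(t) - ξ⁺_1(q)` is an integer times a single linear form, e.g.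
`(n + 1)(-α + (n + q)δ)` for `t = q + 2n + 1, q + 2n + 2`. Splitting one linear factor off the
products, the identity at a vertex reduces to a Pascal-type binomial identity and an affine
relation between linear forms, such as `(-α + nδ) + q(-α + (n + q + 1)δ) = (q + 1)(-α + (n + q)δ)`.
For `|t| ≤ q` both sides vanish.
-/

noncomputable section

open Finset MvPolynomial

/-- The coefficient ring `R = ℚ[α,δ]`, realized as polynomials in two variables. -/
abbrev Rpoly : Type := MvPolynomial (Fin 2) ℚ

/-- The variable `α`. -/
def va : Rpoly := X 0

/-- The variable `δ`. -/
def vd : Rpoly := X 1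

/-- `P⁻(a,b) = ∏_{k=a}^{b} (−α + k·δ)`. -/
def Pneg (a b : ℤ) : Rpoly :=
  ∏ k ∈ Finset.Icc a b, (-va + MvPolynomial.C (k : ℚ) * vd)

/-- `P⁺(a,b) = ∏_{k=a}^{b} (α + k·δ)`. -/
def Ppos (a b : ℤ) : Rpoly :=
  ∏ k ∈ Finset.Icc a b, (va + MvPolynomial.C (k : ℚ) * vd)

/-- Binomial coefficient `C(n,q)` (all uses have `n ≥ 0`). -/
def B (n : ℤ) (q : ℕ) : ℚ := (n.toNat).choose q

/-- The Knutson–Tao class `ξ⁺_q = ξ(m+q, m−q)`, as a function on vertices `t`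
(the vertex `t` encodes the pair `(m+t, m−t)`). -/
def xiP (m : ℤ) (q : ℕ) (t : ℤ) : Rpoly :=
  if (q : ℤ) ≤ t ∧ t ≤ m then
    MvPolynomial.C (B (⌈((t : ℚ) - (q : ℚ) + 1) / 2⌉ + q - 1) q) *
      Pneg (⌈((t : ℚ) - (q : ℚ) + 1) / 2⌉ - 1) (⌈((t : ℚ) - (q : ℚ) + 1) / 2⌉ + q - 2)
  else if -m ≤ t ∧ t ≤ -((q : ℤ) + 1) then
    MvPolynomial.C (B (⌈(-(t : ℚ) - (q : ℚ)) / 2⌉ + q - 1) q) *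
      Ppos (⌈(-(t : ℚ) - (q : ℚ)) / 2⌉ + 1) (⌈(-(t : ℚ) - (q : ℚ)) / 2⌉ + q)
  else 0

/-- The Knutson–Tao class `ξ⁻_q = ξ(m−q, m+q)`. -/
def xiM (m : ℤ) (q : ℕ) (t : ℤ) : Rpoly :=
  if (q : ℤ) + 1 ≤ t ∧ t ≤ m then
    MvPolynomial.C (B (⌈((t : ℚ) - (q : ℚ)) / 2⌉ + q - 1) q) *
      Pneg (⌈((t : ℚ) - (q : ℚ)) / 2⌉) (⌈((t : ℚ) - (q : ℚ)) / 2⌉ + q - 1)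
  else if -m ≤ t ∧ t ≤ -(q : ℤ) then
    MvPolynomial.C (B (⌈(-(t : ℚ) - (q : ℚ) + 1) / 2⌉ + q - 1) q) *
      Ppos (⌈(-(t : ℚ) - (q : ℚ) + 1) / 2⌉) (⌈(-(t : ℚ) - (q : ℚ) + 1) / 2⌉ + q - 1)
  else 0

/-- The weight of the vertex `t`: `w(t) = ((1−2t)/2)·α + (t(t−1)/2)·δ`. -/
def w (t : ℤ) : Rpoly :=
  MvPolynomial.C ((1 - 2 * (t : ℚ)) / 2) * va +
    MvPolynomial.C (((t : ℚ) * ((t : ℚ) - 1)) / 2) * vd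

lemma ceil_add_one_div_two (k : ℤ) : ⌈((k : ℚ) + 1) / 2⌉ = k / 2 + 1 := by
  have h := Rat.ceil_intCast_div_natCast (k + 1) 2
  push_cast at h
  rw [h]
  omega

lemma B_natCast (n q : ℕ) : B n q = n.choose q := by
  simp [B]

section Products

variable {a b : ℤ}

lemma Pneg_eq_mul_Pneg_succ (h : a ≤ b) : Pneg a b = (-va + a * vd) * Pneg (a + 1) b := by
  simp only [Pneg, map_intCast]
  rw [Icc_add_one_left_eq_Ioc]
  exact (mul_prod_Ioc_eq_prod_Icc h).symm

lemma Pneg_eq_Pneg_pred_mul (h : a ≤ b) : Pneg a b = Pneg a (b - 1) * (-va + b * vd) := by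
  simp only [Pneg, map_intCast]
  rw [← Ico_add_one_right_eq_Icc a (b - 1), sub_add_cancel]
  exact (prod_Ico_mul_eq_prod_Icc h).symm

lemma Ppos_eq_mul_Ppos_succ (h : a ≤ b) : Ppos a b = (va + a * vd) * Ppos (a + 1) b := by
  simp only [Ppos, map_intCast]
  rw [Icc_add_one_left_eq_Ioc]
  exact (mul_prod_Ioc_eq_prod_Icc h).symm

lemma Ppos_eq_Ppos_pred_mul (h : a ≤ b) : Ppos a b = Ppos a (b - 1) * (va + b * vd) := by
  simp only [Ppos, map_intCast]
  rw [← Ico_add_one_right_eq_Icc a (b - 1), sub_add_cancel]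
  exact (prod_Ico_mul_eq_prod_Icc h).symm

lemma Pneg_self (a : ℤ) : Pneg a a = -va + a * vd := by
  simp [Pneg]

lemma Ppos_self (a : ℤ) : Ppos a a = va + a * vd := by
  simp [Ppos]

end Products

section Evaluation

variable {m t : ℤ} {Q n : ℕ}

lemma xiP_of_le (hQt : Q ≤ t) (htm : t ≤ m) (hn : (t - Q) / 2 = n) :
    xiP m Q t = ((n + Q).choose Q : Rpoly) * Pneg n (n + Q - 1) := by
  have hc : ⌈((t : ℚ) - Q + 1) / 2⌉ = n + 1 := by
    rw [← hn, ← ceil_add_one_div_two]; push_cast; rfl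
  rw [xiP, if_pos ⟨hQt, htm⟩, hc, show (n : ℤ) + 1 + Q - 1 = (n + Q : ℕ) by push_cast; ring,
    B_natCast, map_natCast]
  congr 2 <;> ring

lemma xiP_of_lt_neg (hmt : -m ≤ t) (htQ : t < -Q) (hn : (-t - Q - 1) / 2 = n) :
    xiP m Q t = ((n + Q).choose Q : Rpoly) * Ppos (n + 2) (n + Q + 1) := by
  have hc : ⌈(-(t : ℚ) - Q) / 2⌉ = n + 1 := by
    rw [← hn, ← ceil_add_one_div_two]; push_cast; ring_nf
  rw [xiP, if_neg (by omega), if_pos ⟨hmt, by omega⟩, hc,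
    show (n : ℤ) + 1 + Q - 1 = (n + Q : ℕ) by push_cast; ring, B_natCast, map_natCast]
  congr 2; ring

-- Also valid at the vertex `t = -(Q + 1)` outside the support, where `n = 0` and
-- `C(Q, Q + 1) = 0`; the same holds for `xiM_succ_of_le` at `t = Q + 1`.
lemma xiP_succ_of_le_neg (hmt : -m ≤ t) (htQ : t ≤ -(Q + 1)) (hn : (-t - Q) / 2 = n) :
    xiP m (Q + 1) t = ((n + Q).choose (Q + 1) : Rpoly) * Ppos (n + 1) (n + Q + 1) := by
  rcases eq_or_lt_of_le htQ with rfl | htQ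
  · rw [xiP, if_neg (by omega), if_neg (by omega), show n = 0 by omega, zero_add,
      Nat.choose_eq_zero_of_lt (by omega), Nat.cast_zero, zero_mul]
  obtain ⟨k, rfl⟩ : ∃ k, n = k + 1 := ⟨n - 1, by omega⟩
  rw [xiP_of_lt_neg hmt (by push_cast; omega) (n := k) (by push_cast at hn ⊢; omega)]
  congr 2 <;> push_cast <;> ring_nf

lemma xiM_succ_of_le (hQt : Q + 1 ≤ t) (htm : t ≤ m) (hn : (t - Q) / 2 = n) :
    xiM m (Q + 1) t = ((n + Q).choose (Q + 1) : Rpoly) * Pneg n (n + Q) := by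
  rcases eq_or_lt_of_le hQt with rfl | hQt
  · rw [xiM, if_neg (by omega), if_neg (by omega), show n = 0 by omega, zero_add,
      Nat.choose_eq_zero_of_lt (by omega), Nat.cast_zero, zero_mul]
  have hc : ⌈((t : ℚ) - (Q + 1 : ℕ)) / 2⌉ = n := by
    rw [show n = (t - Q - 2) / 2 + 1 by omega, ← ceil_add_one_div_two]; push_cast; ring_nf
  rw [xiM, if_pos ⟨by omega, htm⟩, hc,
    show (n : ℤ) + (Q + 1 : ℕ) - 1 = (n + Q : ℕ) by push_cast; ring, B_natCast, map_natCast]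
  congr 2

lemma xiM_of_le_neg (hmt : -m ≤ t) (htQ : t ≤ -Q) (hn : (-t - Q) / 2 = n) :
    xiM m Q t = ((n + Q).choose Q : Rpoly) * Ppos (n + 1) (n + Q) := by
  have hc : ⌈(-(t : ℚ) - Q + 1) / 2⌉ = n + 1 := by
    rw [← hn, ← ceil_add_one_div_two]; push_cast; rfl
  rw [xiM, if_neg (by omega), if_pos ⟨hmt, htQ⟩, hc,
    show (n : ℤ) + 1 + Q - 1 = (n + Q : ℕ) by push_cast; ring, B_natCast, map_natCast]
  congr 2

lemma xiP_eq_zero (hQt : -Q ≤ t) (htQ : t < Q) : xiP m Q t = 0 := by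
  rw [xiP, if_neg (by omega), if_neg (by omega)]

lemma xiM_eq_zero (hQt : -Q < t) (htQ : t ≤ Q) : xiM m Q t = 0 := by
  rw [xiM, if_neg (by omega), if_neg (by omega)]

end Evaluation

section XiOne

variable {m t : ℤ} {q n : ℕ}

lemma exists_xiP_one_eq_of_even (hq : Even q) (hq0 : 0 < q) (hqm : q ≤ m) :
    ∃ p : ℕ, q = 2 * (p + 1) ∧ xiP m 1 q = ((p : Rpoly) + 1) * (-va + p * vd) := by
  obtain ⟨p, rfl⟩ := hq.two_dvd
  obtain ⟨p, rfl⟩ : ∃ p', p = p' + 1 := ⟨p - 1, by omega⟩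
  refine ⟨p, rfl, ?_⟩
  rw [xiP_of_le (n := p) (by omega) hqm (by push_cast; omega), Nat.cast_one,
    add_sub_cancel_right, Pneg_self, Nat.choose_one_right]
  push_cast
  ring

lemma xiP_one_sub_of_lt (hq : Even q) (hq0 : 0 < q) (hqm : q ≤ m) (ht : q < t) (htm : t ≤ m)
    (hn : (t - q - 1) / 2 = n) :
    xiP m 1 t - xiP m 1 q = ((n : Rpoly) + 1) * (-va + (n + q) * vd) := by
  obtain ⟨p, rfl, hp⟩ := exists_xiP_one_eq_of_even hq hq0 hqm
  rw [hp, xiP_of_le (n := p + n + 1) (by omega) htm (by push_cast at *; omega),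
    Nat.cast_one, add_sub_cancel_right, Pneg_self, Nat.choose_one_right]
  push_cast
  ring

lemma xiP_one_sub_of_lt_neg (hq : Even q) (hq0 : 0 < q) (hqm : q ≤ m) (hmt : -m ≤ t)
    (ht : t < -q) (hn : (-t - q) / 2 = n) :
    xiP m 1 t - xiP m 1 q = ((n : Rpoly) + q) * (va + (n + 1) * vd) := by
  obtain ⟨p, rfl, hp⟩ := exists_xiP_one_eq_of_even hq hq0 hqm
  rw [hp, xiP_of_lt_neg (n := p + n) hmt (by omega) (by push_cast at *; omega), Nat.cast_one,
    show ((p + n : ℕ) : ℤ) + 1 + 1 = (p + n : ℕ) + 2 by ring, Ppos_self, Nat.choose_one_right]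
  push_cast
  ring

end XiOne

lemma succ_mul_choose_add_succ (n q : ℕ) :
    (q + 1) * (n + q).choose (q + 1) = n * (n + q).choose q := by
  have h := Nat.choose_succ_right_eq (n + q) q
  rw [Nat.add_sub_cancel] at h
  linarith

lemma add_one_mul_choose_add (n q : ℕ) :
    (n + 1) * (n + q).choose q = (n + q + 1).choose (q + 1) + q * (n + q).choose (q + 1) := by
  have := succ_mul_choose_add_succ n q
  rw [Nat.choose_succ_succ']
  linarith

lemma add_mul_choose_add (n q : ℕ) :
    (n + q) * (n + q).choose q = (n + q).choose (q + 1) + q * (n + q + 1).choose (q + 1) := by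
  have := succ_mul_choose_add_succ n q
  rw [Nat.choose_succ_succ']
  linarith

def PieriAt (m : ℤ) (q : ℕ) (t : ℤ) : Prop :=
  xiP m q t * (xiP m 1 t - xiP m 1 q) = xiP m (q + 1) t + (q : Rpoly) * xiM m (q + 1) t

section Pieri

variable {m t : ℤ} {q n : ℕ}

lemma pieriAt_of_odd_pos (hq : Even q) (hq0 : 0 < q) (htm : t ≤ m) (ht : t = q + 2 * n + 1) :
    PieriAt m q t := by
  have hsplit := Pneg_eq_Pneg_pred_mul (a := n) (b := n + q) (by omega)
  have key : ((n : Rpoly) + 1) * ((n + q).choose q : ℕ) =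
      ((n + q + 1).choose (q + 1) : ℕ) + q * ((n + q).choose (q + 1) : ℕ) := by
    exact_mod_cast add_one_mul_choose_add n q
  rw [PieriAt, xiP_of_le (n := n) (by omega) htm (by omega),
    xiP_one_sub_of_lt hq hq0 (by omega) (by omega) htm (n := n) (by omega),
    xiP_of_le (n := n) (by omega) htm (by omega), xiM_succ_of_le (n := n) (by omega) htm (by omega)]
  push_cast at hsplit ⊢
  linear_combination (norm := ring_nf)
    -(((n + q + 1).choose (q + 1) : ℕ) + q * ((n + q).choose (q + 1) : ℕ) : Rpoly) * hsplit
    + Pneg n (n + q - 1) * (-va + (n + q) * vd) * key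

lemma pieriAt_of_even_pos (hq : Even q) (hq0 : 0 < q) (htm : t ≤ m) (ht : t = q + 2 * n + 2) :
    PieriAt m q t := by
  have hsplit₁ := Pneg_eq_mul_Pneg_succ (a := n) (b := n + q) (by omega)
  have hsplit₂ := Pneg_eq_Pneg_pred_mul (a := n + 1) (b := n + q + 1) (by omega)
  have key : ((n : Rpoly) + 1) * ((n + 1 + q).choose q : ℕ) =
      (q + 1) * ((n + 1 + q).choose (q + 1) : ℕ) := by
    exact_mod_cast (succ_mul_choose_add_succ (n + 1) q).symm
  rw [PieriAt, xiP_of_le (n := n + 1) (by omega) htm (by omega),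
    xiP_one_sub_of_lt hq hq0 (by omega) (by omega) htm (n := n) (by omega),
    xiP_of_le (n := n) (by omega) htm (by omega),
    xiM_succ_of_le (n := n + 1) (by omega) htm (by omega)]
  push_cast at hsplit₁ hsplit₂ ⊢
  linear_combination (norm := ring_nf)
    -((n + q + 1).choose (q + 1) : Rpoly) * (hsplit₁ + q * hsplit₂)
    + Pneg (n + 1) (n + q) * (-va + (n + q) * vd) * key

lemma pieriAt_of_odd_neg (hq : Even q) (hq0 : 0 < q) (hmt : -m ≤ t) (ht : t = -q - 2 * n - 1) :
    PieriAt m q t := by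
  have hsplit := Ppos_eq_mul_Ppos_succ (a := n + 1) (b := n + q + 1) (by omega)
  have key : ((n : Rpoly) + q) * ((n + q).choose q : ℕ) =
      ((n + q).choose (q + 1) : ℕ) + q * ((n + q + 1).choose (q + 1) : ℕ) := by
    exact_mod_cast add_mul_choose_add n q
  rw [PieriAt, xiP_of_lt_neg (n := n) hmt (by omega) (by omega),
    xiP_one_sub_of_lt_neg hq hq0 (by omega) hmt (by omega) (n := n) (by omega),
    xiP_succ_of_le_neg (n := n) hmt (by omega) (by omega),
    xiM_of_le_neg (n := n) hmt (by omega) (by push_cast; omega)]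
  push_cast at hsplit ⊢
  linear_combination (norm := ring_nf)
    -(((n + q).choose (q + 1) : ℕ) + q * ((n + q + 1).choose (q + 1) : ℕ) : Rpoly) * hsplit
    + Ppos (n + 2) (n + q + 1) * (va + (n + 1) * vd) * key

lemma pieriAt_of_even_neg (hq : Even q) (hq0 : 0 < q) (hmt : -m ≤ t) (ht : t = -q - 2 * n - 2) :
    PieriAt m q t := by
  have hsplit₁ := Ppos_eq_Ppos_pred_mul (a := n + 2) (b := n + q + 2) (by omega)
  have hsplit₂ := Ppos_eq_mul_Ppos_succ (a := n + 1) (b := n + q + 1) (by omega)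
  have key : ((n : Rpoly) + q + 1) * ((n + q).choose q : ℕ) =
      ((n + q + 1).choose (q + 1) : ℕ) * (q + 1) := by
    exact_mod_cast Nat.add_one_mul_choose_eq (n + q) q
  rw [PieriAt, xiP_of_lt_neg (n := n) hmt (by omega) (by omega),
    xiP_one_sub_of_lt_neg hq hq0 (by omega) hmt (by omega) (n := n + 1) (by omega),
    xiP_succ_of_le_neg (n := n + 1) hmt (by omega) (by omega),
    xiM_of_le_neg (n := n) hmt (by omega) (by push_cast; omega)]
  push_cast at hsplit₁ hsplit₂ ⊢
  linear_combination (norm := ring_nf)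
    -((n + q + 1).choose (q + 1) : Rpoly) * (hsplit₁ + q * hsplit₂)
    + Ppos (n + 2) (n + q + 1) * (va + (n + 2) * vd) * key

lemma pieriAt_of_neg_le_of_le (hqt : -q ≤ t) (htq : t ≤ q) : PieriAt m q t := by
  rw [PieriAt, xiP_eq_zero (Q := q + 1) (by omega) (by omega),
    xiM_eq_zero (by omega) (by omega), mul_zero, add_zero]
  rcases eq_or_lt_of_le htq with rfl | htq
  · rw [sub_self, mul_zero]
  · rw [xiP_eq_zero hqt htq, zero_mul]

end Pieri

theorem statement8_general (m : ℕ) (q : ℕ) (heven : Even q)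
    (hq0 : 0 < q)
    (t : ℤ) (ht1 : -(m : ℤ) ≤ t) (ht2 : t ≤ (m : ℤ)) :
    xiP m q t * (xiP m 1 t - xiP m 1 (q : ℤ)) =
      xiP m (q + 1) t + (q : Rpoly) * xiM m (q + 1) t := by
  show PieriAt m q t
  rcases lt_or_ge (q : ℤ) t with hpos | hle
  · obtain ⟨n, ht | ht⟩ : ∃ n : ℕ, t = q + 2 * n + 1 ∨ t = q + 2 * n + 2 :=
      ⟨((t - q - 1) / 2).toNat, by omega⟩
    · exact pieriAt_of_odd_pos heven hq0 ht2 ht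
    · exact pieriAt_of_even_pos heven hq0 ht2 ht
  rcases le_or_gt (-q : ℤ) t with hmid | hneg
  · exact pieriAt_of_neg_le_of_le hmid hle
  obtain ⟨n, ht | ht⟩ : ∃ n : ℕ, t = -q - 2 * n - 1 ∨ t = -q - 2 * n - 2 :=
    ⟨((-t - q - 1) / 2).toNat, by omega⟩
  · exact pieriAt_of_odd_neg heven hq0 ht1 ht
  · exact pieriAt_of_even_neg heven hq0 ht1 ht

/-- for even `0 < q < m`,
`ξ⁺_q · (ξ⁺_1 − ξ⁺_1(q)) = ξ⁺_{q+1} + q·ξ⁻_{q+1}` pointwise on `V_m`. -/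
theorem statement8 (m : ℕ) (hm : 1 ≤ m) (q : ℕ) (heven : Even q)
    (hq0 : 0 < q) (hqm : q < m)
    (t : ℤ) (ht1 : -(m : ℤ) ≤ t) (ht2 : t ≤ (m : ℤ)) :
    xiP m q t * (xiP m 1 t - xiP m 1 (q : ℤ)) =
      xiP m (q + 1) t + (q : Rpoly) * xiM m (q + 1) t :=
  statement8_general m q heven hq0 t ht1 ht2
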